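/- The complement of a countable set in ℝ³ is simply connected. -/
import Mathlib

open Set Metric unitInterval

noncomputable section CountableComplAux


/-- Coordinate functions and Stone-Weierstrass: every continuous map `I × I → ℝ` can be
uniformly approximated by restrictions of `C¹` functions on `ℝ × ℝ`. -/
lemma exists_contDiff_approx_real (f : C(I × I, ℝ)) {ε : ℝ} (hε : 0 < ε) :
    ∃ G : ℝ × ℝ → ℝ, ContDiff ℝ 1 G ∧ ∀ z : I × I, |G ((z.1 : ℝ), (z.2 : ℝ)) - f z| < ε := by
  set c1 : C(I × I, ℝ) := ⟨fun z => (z.1 : ℝ), by fun_prop⟩ with hc1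
  set c2 : C(I × I, ℝ) := ⟨fun z => (z.2 : ℝ), by fun_prop⟩ with hc2
  set A : Subalgebra ℝ C(I × I, ℝ) := Algebra.adjoin ℝ {c1, c2} with hA
  have hsep : A.SeparatesPoints := by
    intro z w hzw
    rcases Prod.ext_iff.not.mp hzw with h
    by_cases h1 : z.1 = w.1
    · have h2 : z.2 ≠ w.2 := by
        intro h2; exact hzw (Prod.ext h1 h2)
      exact ⟨_, ⟨c2, Algebra.subset_adjoin (by simp), rfl⟩, by
        simpa [c2, Subtype.ext_iff] using h2⟩
    · exact ⟨_, ⟨c1, Algebra.subset_adjoin (by simp), rfl⟩, by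
        simpa [c1, Subtype.ext_iff] using h1⟩
  have hext : ∀ g ∈ A, ∃ G : ℝ × ℝ → ℝ, ContDiff ℝ 1 G ∧
      ∀ z : I × I, G ((z.1 : ℝ), (z.2 : ℝ)) = g z := by
    intro g hgA
    induction hgA using Algebra.adjoin_induction with
    | mem x hx =>
      rcases hx with hx | hx
      · exact ⟨Prod.fst, contDiff_fst, by subst hx; intro z; rfl⟩
      · exact ⟨Prod.snd, contDiff_snd, by simp at hx; subst hx; intro z; rfl⟩
    | algebraMap r => exact ⟨fun _ => r, contDiff_const, fun z => rfl⟩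
    | add x y hx hy ihx ihy =>
      obtain ⟨G1, h1, e1⟩ := ihx
      obtain ⟨G2, h2, e2⟩ := ihy
      exact ⟨G1 + G2, h1.add h2, fun z => by simp [e1 z, e2 z]⟩
    | mul x y hx hy ihx ihy =>
      obtain ⟨G1, h1, e1⟩ := ihx
      obtain ⟨G2, h2, e2⟩ := ihy
      exact ⟨G1 * G2, h1.mul h2, fun z => by simp [e1 z, e2 z]⟩
  obtain ⟨⟨g, hgA⟩, hg⟩ :=
    ContinuousMap.exists_mem_subalgebra_near_continuousMap_of_separatesPoints A hsep f ε hε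
  obtain ⟨G, hG, hGg⟩ := hext g hgA
  refine ⟨G, hG, fun z => ?_⟩
  rw [hGg z]
  have := ContinuousMap.norm_coe_le_norm (g - f) z
  have h2 : ‖g - f‖ < ε := hg
  simp only [ContinuousMap.coe_sub, Pi.sub_apply, Real.norm_eq_abs] at this
  exact lt_of_le_of_lt this h2

lemma exists_contDiff_approx (F : C(I × I, EuclideanSpace ℝ (Fin 3))) {ε : ℝ} (hε : 0 < ε) :
    ∃ G : ℝ × ℝ → EuclideanSpace ℝ (Fin 3), ContDiff ℝ 1 G ∧
      ∀ z : I × I, dist (G ((z.1 : ℝ), (z.2 : ℝ))) (F z) ≤ ε := by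
  have hε3 : 0 < ε / 3 := by linarith
  have h : ∀ i : Fin 3, ∃ G : ℝ × ℝ → ℝ, ContDiff ℝ 1 G ∧
      ∀ z : I × I, |G ((z.1 : ℝ), (z.2 : ℝ)) - F z i| < ε / 3 := fun i =>
    exists_contDiff_approx_real ⟨fun z => F z i, by fun_prop⟩ hε3
  choose G hG hGF using h
  refine ⟨fun u => (EuclideanSpace.equiv (Fin 3) ℝ).symm (fun i => G i u), ?_, ?_⟩
  · exact (EuclideanSpace.equiv (Fin 3) ℝ).symm.contDiff.comp (contDiff_pi.2 hG)
  · intro z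
    rw [EuclideanSpace.dist_eq]
    have : ∀ i : Fin 3, dist (G i ((z.1 : ℝ), (z.2 : ℝ))) (F z i) ^ 2 ≤ (ε/3)^2 := by
      intro i
      have := (hGF i z).le
      rw [Real.dist_eq]
      nlinarith [abs_nonneg (G i ((z.1 : ℝ), (z.2 : ℝ)) - F z i), sq_abs (G i ((z.1 : ℝ), (z.2 : ℝ)) - F z i)]
    calc Real.sqrt (∑ i, dist ((EuclideanSpace.equiv (Fin 3) ℝ).symm (fun i => G i ((z.1:ℝ),(z.2:ℝ))) i) (F z i) ^ 2)
        ≤ Real.sqrt (∑ i : Fin 3, (ε/3)^2) := by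
          apply Real.sqrt_le_sqrt
          apply Finset.sum_le_sum
          intro i _
          simpa using this i
      _ ≤ ε := by
          rw [Finset.sum_const]
          simp only [Finset.card_univ, Fintype.card_fin, nsmul_eq_mul]
          rw [show ((3:ℕ):ℝ) * (ε/3)^2 = (ε/3)^2*3 by push_cast; ring]
          have h1 : (ε/3)^2*3 ≤ ε^2 := by nlinarith
          calc Real.sqrt ((ε/3)^2*3) ≤ Real.sqrt (ε^2) := Real.sqrt_le_sqrt h1
            _ = ε := Real.sqrt_sq hε.le


def BdSq : Set (I × I) := {z | z.1 = 0 ∨ z.1 = 1 ∨ z.2 = 0 ∨ z.2 = 1}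

lemma exists_perturbation (F : C(I × I, EuclideanSpace ℝ (Fin 3)))
    (s' : EuclideanSpace ℝ (Fin 3)) {ε : ℝ} (hε : 0 < ε)
    (hbd : ∀ z ∈ BdSq, F z ≠ s') :
    ∃ F' : C(I × I, EuclideanSpace ℝ (Fin 3)),
      (∀ z, dist (F' z) (F z) ≤ ε) ∧ (∀ z ∈ BdSq, F' z = F z) ∧ ∀ z, F' z ≠ s' := by
  -- the boundary is compact and nonempty
  have hBd_closed : IsClosed BdSq := by
    have h0 : IsClosed {z : I × I | z.1 = 0} := isClosed_eq (by fun_prop) continuous_const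
    have h1 : IsClosed {z : I × I | z.1 = 1} := isClosed_eq (by fun_prop) continuous_const
    have h2 : IsClosed {z : I × I | z.2 = 0} := isClosed_eq (by fun_prop) continuous_const
    have h3 : IsClosed {z : I × I | z.2 = 1} := isClosed_eq (by fun_prop) continuous_const
    exact (h0.union (h1.union (h2.union h3)))
  have hBd_ne : BdSq.Nonempty := ⟨(0, 0), Or.inl rfl⟩
  obtain ⟨z₀, hz₀, hz₀min⟩ := (hBd_closed.isCompact).exists_isMinOn hBd_ne
    (Continuous.continuousOn (by fun_prop : Continuous fun z : I × I => dist (F z) s'))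
  set d : ℝ := dist (F z₀) s' with hd
  have hd_pos : 0 < d := dist_pos.mpr (hbd z₀ hz₀)
  set δ : ℝ := min ε d / 4 with hδdef
  have hδ_pos : 0 < δ := by positivity
  have hδε : δ ≤ ε / 4 := by
    have := min_le_left ε d; simp only [hδdef]; linarith
  have hδd : 4 * δ ≤ d := by
    have := min_le_right ε d; simp only [hδdef]; linarith
  -- approximation with C¹ map
  obtain ⟨G, hG, hGF⟩ := exists_contDiff_approx F (by positivity : (0:ℝ) < δ/8)
  -- a point near s' outside the range of G
  have hdense : Dense (range G)ᶜ := by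
    apply hG.dense_compl_range_of_finrank_lt_finrank
    simp [finrank_euclideanSpace_fin]
  obtain ⟨s'', hs''⟩ : ∃ s'', s'' ∈ ball s' (δ/8) ∧ s'' ∉ range G := by
    have hne : (ball s' (δ/8)).Nonempty := ⟨s', mem_ball_self (by positivity)⟩
    rcases hdense.exists_mem_open isOpen_ball hne with ⟨u, hu1, hu2⟩
    exact ⟨u, hu2, hu1⟩
  -- the bump function
  set φ : EuclideanSpace ℝ (Fin 3) → ℝ := fun u => max 0 (min 1 (2 - 2 * dist u s' / δ)) with hφ
  have hφ_cont : Continuous φ := by fun_prop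
  have hφ01 : ∀ u, 0 ≤ φ u ∧ φ u ≤ 1 := fun u => ⟨le_max_left _ _, by
    simp only [hφ]
    rcases le_or_gt (min 1 (2 - 2 * dist u s' / δ)) 0 with h | h
    · rw [max_eq_left h]; exact zero_le_one
    · rw [max_eq_right h.le]; exact min_le_left _ _⟩
  have hφ_one : ∀ u, dist u s' ≤ δ / 2 → φ u = 1 := by
    intro u hu
    have h0 : 2 * dist u s' / δ ≤ 1 := by
      rw [div_le_one hδ_pos]; linarith
    have : (1:ℝ) ≤ 2 - 2 * dist u s' / δ := by linarith
    simp [hφ, min_eq_left this, le_trans zero_le_one this]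
  have hφ_zero : ∀ u, δ ≤ dist u s' → φ u = 0 := by
    intro u hu
    have : 2 - 2 * dist u s' / δ ≤ 0 := by
      have h0 : (2:ℝ) ≤ 2 * dist u s' / δ := by
        rw [le_div_iff₀ hδ_pos]; nlinarith
      linarith
    have : min 1 (2 - 2 * dist u s' / δ) ≤ 0 := le_trans (min_le_right _ _) this
    simp [hφ, max_eq_left this]
  -- the perturbed map
  set F' : C(I × I, EuclideanSpace ℝ (Fin 3)) :=
    ⟨fun z => F z + φ (F z) • (G ((z.1:ℝ),(z.2:ℝ)) + (s' - s'') - F z), by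
      refine F.continuous.add (Continuous.smul (hφ_cont.comp F.continuous) ?_)
      refine Continuous.sub (Continuous.add ?_ continuous_const) F.continuous
      exact hG.continuous.comp (by fun_prop)⟩ with hF'
  have key_bound : ∀ z : I × I, ‖G ((z.1:ℝ),(z.2:ℝ)) + (s' - s'') - F z‖ ≤ δ/4 := by
    intro z
    have h1 : ‖G ((z.1:ℝ),(z.2:ℝ)) - F z‖ ≤ δ/8 := by
      rw [← dist_eq_norm]; exact hGF z
    have h2 : ‖s' - s''‖ ≤ δ/8 := by
      rw [← dist_eq_norm, dist_comm, ← mem_closedBall]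
      exact ball_subset_closedBall hs''.1
    calc ‖G ((z.1:ℝ),(z.2:ℝ)) + (s' - s'') - F z‖
        = ‖(G ((z.1:ℝ),(z.2:ℝ)) - F z) + (s' - s'')‖ := by rw [add_sub_right_comm]
      _ ≤ ‖G ((z.1:ℝ),(z.2:ℝ)) - F z‖ + ‖s' - s''‖ := norm_add_le _ _
      _ ≤ δ/8 + δ/8 := add_le_add h1 h2
      _ = δ/4 := by ring
  have hdist : ∀ z, dist (F' z) (F z) ≤ δ/4 := by
    intro z
    rw [dist_eq_norm]
    simp only [hF', ContinuousMap.coe_mk, add_sub_cancel_left]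
    rw [norm_smul]
    calc ‖φ (F z)‖ * ‖G ((z.1:ℝ),(z.2:ℝ)) + (s' - s'') - F z‖
        ≤ 1 * (δ/4) := by
          apply mul_le_mul ?_ (key_bound z) (norm_nonneg _) zero_le_one
          rw [Real.norm_eq_abs, abs_le]
          exact ⟨by linarith [(hφ01 (F z)).1], (hφ01 (F z)).2⟩
      _ = δ/4 := one_mul _
  refine ⟨F', fun z => le_trans (hdist z) (by linarith), ?_, ?_⟩
  · intro z hz
    have h1 : d ≤ dist (F z) s' := hz₀min hz
    have h0 : φ (F z) = 0 := hφ_zero _ (by linarith)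
    simp [hF', h0]
  · intro z
    rcases le_or_gt (dist (F z) s') (δ/2) with hcase | hcase
    · have h1 : φ (F z) = 1 := hφ_one _ hcase
      simp only [hF', ContinuousMap.coe_mk, h1, one_smul]
      intro hcon
      apply hs''.2
      refine ⟨((z.1:ℝ),(z.2:ℝ)), ?_⟩
      rw [← sub_eq_zero]
      calc G ((z.1:ℝ),(z.2:ℝ)) - s''
          = F z + (G ((z.1:ℝ),(z.2:ℝ)) + (s' - s'') - F z) - s' := by abel
        _ = 0 := sub_eq_zero.mpr hcon
    · intro hcon
      have h2 := hdist z
      rw [hcon] at h2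
      have : dist (F z) s' ≤ δ/4 := by rwa [dist_comm] at h2
      linarith

lemma homotopic_of_countable_compl {S : Set (EuclideanSpace ℝ (Fin 3))} (hS : S.Countable)
    {x y : ↥(Sᶜ)} (p q : Path x y) : Path.Homotopic p q := by
  classical
  set Y := C(I × I, EuclideanSpace ℝ (Fin 3)) with hY
  set X : Set Y := {F | (∀ t, F (0, t) = (p t : EuclideanSpace ℝ (Fin 3))) ∧
      (∀ t, F (1, t) = (q t : EuclideanSpace ℝ (Fin 3))) ∧
      (∀ s, F (s, 0) = (x : EuclideanSpace ℝ (Fin 3))) ∧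
      (∀ s, F (s, 1) = (y : EuclideanSpace ℝ (Fin 3)))} with hX
  -- X is closed
  have hXc : IsClosed X := by
    have e : X = (⋂ t, {F : Y | F (0, t) = (p t : EuclideanSpace ℝ (Fin 3))}) ∩
        ((⋂ t, {F : Y | F (1, t) = (q t : EuclideanSpace ℝ (Fin 3))}) ∩
        ((⋂ s, {F : Y | F (s, 0) = (x : EuclideanSpace ℝ (Fin 3))}) ∩
        (⋂ s, {F : Y | F (s, 1) = (y : EuclideanSpace ℝ (Fin 3))}))) := by
      ext F
      simp only [hX, mem_setOf_eq, mem_inter_iff, mem_iInter]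
    rw [e]
    refine IsClosed.inter ?_ (IsClosed.inter ?_ (IsClosed.inter ?_ ?_)) <;>
      exact isClosed_iInter fun t =>
        isClosed_eq (ContinuousEvalConst.continuous_eval_const _) continuous_const
  haveI : CompleteSpace X := hXc.completeSpace_coe
  haveI : Countable ↥S := hS.to_subtype
  -- members of X map the boundary of the square into Sᶜ
  have hbd_mem : ∀ F : Y, F ∈ X → ∀ z ∈ BdSq, F z ∈ Sᶜ := by
    intro F hF z hz
    rcases hz with h | h | h | h
    · rw [← Prod.mk.eta (p := z), h, hF.1 z.2]; exact (p z.2).2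
    · rw [← Prod.mk.eta (p := z), h, hF.2.1 z.2]; exact (q z.2).2
    · rw [← Prod.mk.eta (p := z), h, hF.2.2.1 z.1]; exact x.2
    · rw [← Prod.mk.eta (p := z), h, hF.2.2.2 z.1]; exact y.2
  -- bad sets are closed
  have hW : ∀ s0 : EuclideanSpace ℝ (Fin 3), IsClosed {F : Y | ∃ z, F z = s0} := by
    intro s0
    have e : {F : Y | ∃ z, F z = s0} =
        Prod.fst '' {Fz : Y × (I × I) | Fz.1 Fz.2 = s0} := by
      ext F
      constructor
      · rintro ⟨z, hz⟩; exact ⟨(F, z), hz, rfl⟩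
      · rintro ⟨⟨F', z⟩, hz, rfl⟩; exact ⟨z, hz⟩
    rw [e]
    exact isClosedMap_fst_of_compactSpace _
      (isClosed_eq (ContinuousEval.continuous_eval) continuous_const)
  -- the good sets, indexed by points of S
  set V : ↥S → Set ↥X := fun i =>
    Subtype.val ⁻¹' {F : Y | ∃ z, F z = (i : EuclideanSpace ℝ (Fin 3))}ᶜ with hV
  have hVopen : ∀ i, IsOpen (V i) := fun i =>
    ((hW _).isOpen_compl).preimage continuous_subtype_val
  have hVdense : ∀ i, Dense (V i) := by
    intro i
    rw [Metric.dense_iff]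
    rintro ⟨F, hF⟩ r hr
    obtain ⟨F', hdist, hbdeq, havoid⟩ := exists_perturbation F (i : EuclideanSpace ℝ (Fin 3))
      (by positivity : (0:ℝ) < r/2)
      (fun z hz => by
        intro hcon
        exact (hbd_mem F hF z hz) (hcon ▸ i.2))
    have hF'X : F' ∈ X := by
      refine ⟨fun t => ?_, fun t => ?_, fun s => ?_, fun s => ?_⟩
      · rw [hbdeq (0, t) (Or.inl rfl)]; exact hF.1 t
      · rw [hbdeq (1, t) (Or.inr (Or.inl rfl))]; exact hF.2.1 t
      · rw [hbdeq (s, 0) (Or.inr (Or.inr (Or.inl rfl)))]; exact hF.2.2.1 s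
      · rw [hbdeq (s, 1) (Or.inr (Or.inr (Or.inr rfl)))]; exact hF.2.2.2 s
    refine ⟨⟨F', hF'X⟩, ?_, ?_⟩
    · rw [mem_ball, Subtype.dist_eq]
      calc dist F' F ≤ r/2 := (ContinuousMap.dist_le (by positivity)).mpr hdist
        _ < r := by linarith
    · simp only [hV, mem_preimage, mem_compl_iff, mem_setOf_eq]
      rintro ⟨z, hz⟩
      exact havoid z hz
  -- Baire category
  have hdense : Dense (⋂ i, V i) := dense_iInter_of_isOpen hVopen hVdense
  -- a starting homotopy: the straight-line homotopy
  have hpc : Continuous fun z : I × I => (p z.2 : EuclideanSpace ℝ (Fin 3)) := by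
    exact continuous_subtype_val.comp (p.continuous.comp continuous_snd)
  have hqc : Continuous fun z : I × I => (q z.2 : EuclideanSpace ℝ (Fin 3)) := by
    exact continuous_subtype_val.comp (q.continuous.comp continuous_snd)
  have hF₀ : (⟨fun z => (1 - (z.1 : ℝ)) • (p z.2 : EuclideanSpace ℝ (Fin 3)) +
      (z.1 : ℝ) • (q z.2 : EuclideanSpace ℝ (Fin 3)), by fun_prop⟩ : Y) ∈ X := by
    refine ⟨fun t => ?_, fun t => ?_, fun s => ?_, fun s => ?_⟩
    · show (1 - ((0:I) : ℝ)) • ((p t : EuclideanSpace ℝ (Fin 3))) + ((0:I) : ℝ) • ((q t : EuclideanSpace ℝ (Fin 3))) = _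
      norm_num
    · show (1 - ((1:I) : ℝ)) • ((p t : EuclideanSpace ℝ (Fin 3))) + ((1:I) : ℝ) • ((q t : EuclideanSpace ℝ (Fin 3))) = _
      norm_num
    · show (1 - (s : ℝ)) • ((p 0 : EuclideanSpace ℝ (Fin 3))) + (s : ℝ) • ((q 0 : EuclideanSpace ℝ (Fin 3))) = _
      rw [p.source, q.source, ← add_smul]
      simp
    · show (1 - (s : ℝ)) • ((p 1 : EuclideanSpace ℝ (Fin 3))) + (s : ℝ) • ((q 1 : EuclideanSpace ℝ (Fin 3))) = _
      rw [p.target, q.target, ← add_smul]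
      simp
  haveI : Nonempty ↥X := ⟨⟨_, hF₀⟩⟩
  obtain ⟨⟨F, hFX⟩, hFV⟩ := hdense.nonempty
  simp only [mem_iInter] at hFV
  have hFS : ∀ z, F z ∈ Sᶜ := by
    intro z hmem
    exact (hFV ⟨F z, hmem⟩) ⟨z, rfl⟩
  -- assemble the homotopy
  refine ⟨{ toFun := fun z => ⟨F z, hFS z⟩,
            continuous_toFun := F.continuous.subtype_mk _,
            map_zero_left := fun t => Subtype.ext (hFX.1 t),
            map_one_left := fun t => Subtype.ext (hFX.2.1 t),
            prop' := fun t u hu => ?_ }⟩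
  rcases hu with hu | hu
  · subst hu
    refine Subtype.ext ?_
    show F (t, 0) = (p.toContinuousMap 0 : ↥(Sᶜ)).val
    rw [hFX.2.2.1 t]
    exact (congrArg Subtype.val (p.source : p 0 = x)).symm
  · simp only [mem_singleton_iff] at hu
    subst hu
    refine Subtype.ext ?_
    show F (t, 1) = (p.toContinuousMap 1 : ↥(Sᶜ)).val
    rw [hFX.2.2.2 t]
    exact (congrArg Subtype.val (p.target : p 1 = y)).symm

end CountableComplAux

/-- The complement of a countable set in ℝ³ is nonempty, path-connected and
simply connected. -/
theorem compl_countable_simplyConnected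
    (S : Set (EuclideanSpace ℝ (Fin 3))) (hS : S.Countable) :
    Sᶜ.Nonempty ∧ IsPathConnected Sᶜ ∧ SimplyConnectedSpace ↥(Sᶜ) := by
  have hrank : 1 < Module.rank ℝ (EuclideanSpace ℝ (Fin 3)) := by
    rw [← Module.finrank_eq_rank, finrank_euclideanSpace_fin]
    exact_mod_cast (by norm_num : (1:ℕ) < 3)
  have hpc : IsPathConnected Sᶜ := hS.isPathConnected_compl_of_one_lt_rank hrank
  have hne : Sᶜ.Nonempty := by
    obtain ⟨w, hw, -⟩ := id hpc
    exact ⟨w, hw⟩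
  refine ⟨hne, hpc, ?_⟩
  rw [simply_connected_iff_paths_homotopic']
  exact ⟨isPathConnected_iff_pathConnectedSpace.mp hpc,
    fun p q => homotopic_of_countable_compl hS p q⟩
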